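/- Edge choice preserves sim-HC under strict inequality: Let G be an overlapping bipartite graph satisfying the strict simultaneous Hall condition |N(P)| + |N(P^S) ∩ N(P^T)| > |P| for all nonempty proper subsets P ⊂ A. Let u ∈ S \ T, (u,v) ∈ E, and let G' be the graph obtained by deleting u from A and deleting every edge (u',v) with u' ∈ S. Then G' satisfies the simultaneous Hall condition |N'(P)| + |N'(P^S) ∩ N'(P^T)| ≥ |P| for all P ⊆ A \ {u}. -/

import Mathlib

open Finset

variable {V W : Type*} [DecidableEq V] [DecidableEq W]

/-- Neighborhood of a set `P` of left vertices in the bipartite graph with edge set `E`. -/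
def nbhd (E : Finset (V × W)) (P : Finset V) : Finset W :=
  (E.filter (fun e => e.1 ∈ P)).image Prod.snd

/-- A set of pairwise non-adjacent edges. -/
def IsMatching (M : Finset (V × W)) : Prop :=
  ∀ e ∈ M, ∀ f ∈ M, e ≠ f → e.1 ≠ f.1 ∧ e.2 ≠ f.2

/-- Every vertex of `S` is incident to an edge of `M`. -/
def Covers (M : Finset (V × W)) (S : Finset V) : Prop :=
  ∀ s ∈ S, ∃ e ∈ M, e.1 = s

/-- `M` is a simultaneous matching: `M ∩ (S × B)` is a matching covering `S` and
`M ∩ (T × B)` is a matching covering `T`. -/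
def SimMatching (E M : Finset (V × W)) (S T : Finset V) : Prop :=
  M ⊆ E ∧
  IsMatching (M.filter (fun e => e.1 ∈ S)) ∧ Covers (M.filter (fun e => e.1 ∈ S)) S ∧
  IsMatching (M.filter (fun e => e.1 ∈ T)) ∧ Covers (M.filter (fun e => e.1 ∈ T)) T

/-!
Every edge of `E` that the edge choice deletes from a set `P ∌ u` ends at `v`, and no edge out
of `P ∩ (T \ S)` is deleted at all. So the two terms of the simultaneous Hall sum can drop by at
most one in total: if `v ∈ N(P ∩ (T \ S))`, then `v` survives in `N'(P)` and only the
intersection term can lose `v`; otherwise the intersection does not contain `v` and only `N(P)`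
can lose it. The strict inequality absorbs that loss.
-/

theorem Finset.card_add_card_inter_le_of_subset_insert {α : Type*} [DecidableEq α]
    {X X' Y Y' Z : Finset α} {a : α}
    (hX : X ⊆ insert a X') (hY : Y ⊆ insert a Y') (hZ : Z ⊆ X') :
    #X + #(Y ∩ Z) ≤ #X' + #(Y' ∩ Z) + 1 := by
  by_cases ha : a ∈ Z
  · have hXX' : X ⊆ X' := fun x hx =>
      (mem_insert.1 (hX hx)).elim (fun h => h ▸ hZ ha) id
    have hYZ : Y ∩ Z ⊆ insert a (Y' ∩ Z) := by
      intro y hy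
      obtain ⟨hyY, hyZ⟩ := mem_inter.1 hy
      rcases mem_insert.1 (hY hyY) with rfl | hyY'
      · exact mem_insert_self _ _
      · exact mem_insert_of_mem (mem_inter.2 ⟨hyY', hyZ⟩)
    have := card_le_card hXX'
    have := (card_le_card hYZ).trans (card_insert_le _ _)
    omega
  · have hYZ : Y ∩ Z ⊆ Y' ∩ Z := by
      intro y hy
      obtain ⟨hyY, hyZ⟩ := mem_inter.1 hy
      rcases mem_insert.1 (hY hyY) with rfl | hyY'
      · exact absurd hyZ ha
      · exact mem_inter.2 ⟨hyY', hyZ⟩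
    have := (card_le_card hX).trans (card_insert_le _ _)
    have := card_le_card hYZ
    omega

section Neighborhood

variable {E : Finset (V × W)} {P Q : Finset V}

theorem mem_nbhd {w : W} : w ∈ nbhd E P ↔ ∃ p ∈ P, (p, w) ∈ E := by
  simp only [nbhd, mem_image, mem_filter, Prod.exists]
  constructor
  · rintro ⟨p, _, ⟨hE, hp⟩, rfl⟩
    exact ⟨p, hp, hE⟩
  · rintro ⟨p, hp, hE⟩
    exact ⟨p, w, ⟨hE, hp⟩, rfl⟩

theorem nbhd_mono (h : P ⊆ Q) : nbhd E P ⊆ nbhd E Q := fun w hw => by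
  obtain ⟨p, hp, he⟩ := mem_nbhd.1 hw
  exact mem_nbhd.2 ⟨p, h hp, he⟩

theorem nbhd_filter_of_forall {q : V × W → Prop} [DecidablePred q]
    (h : ∀ p ∈ P, ∀ w, (p, w) ∈ E → q (p, w)) : nbhd (E.filter q) P = nbhd E P := by
  ext w
  simp only [mem_nbhd, mem_filter]
  exact ⟨fun ⟨p, hp, he, _⟩ => ⟨p, hp, he⟩, fun ⟨p, hp, he⟩ => ⟨p, hp, he, h p hp w he⟩⟩

theorem nbhd_subset_insert_nbhd_filter {q : V × W → Prop} [DecidablePred q] {v : W}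
    (h : ∀ p ∈ P, ∀ w ≠ v, (p, w) ∈ E → q (p, w)) :
    nbhd E P ⊆ insert v (nbhd (E.filter q) P) := fun w hw => by
  obtain ⟨p, hp, he⟩ := mem_nbhd.1 hw
  by_cases hwv : w = v
  · exact hwv ▸ mem_insert_self _ _
  · exact mem_insert_of_mem (mem_nbhd.2 ⟨p, hp, mem_filter.2 ⟨he, h p hp w hwv he⟩⟩)

end Neighborhood

theorem simHall_strict_edge_choice_general (S T : Finset V) (E : Finset (V × W))
    (u : V) (v : W) (hu : u ∈ S \ T)
    (hstrict : ∀ P ⊆ S ∪ T, P.Nonempty → P ⊂ S ∪ T →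
      P.card < (nbhd E P).card +
        (nbhd E (P ∩ (S \ T)) ∩ nbhd E (P ∩ (T \ S))).card) :
    ∀ P ⊆ (S ∪ T).erase u,
      P.card ≤ (nbhd (E.filter (fun e => e.1 ≠ u ∧ ¬(e.1 ∈ S ∧ e.2 = v))) P).card +
        (nbhd (E.filter (fun e => e.1 ≠ u ∧ ¬(e.1 ∈ S ∧ e.2 = v))) (P ∩ (S \ T)) ∩
         nbhd (E.filter (fun e => e.1 ≠ u ∧ ¬(e.1 ∈ S ∧ e.2 = v))) (P ∩ (T \ S))).card := by
  intro P hP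
  set E' := E.filter (fun e => e.1 ≠ u ∧ ¬(e.1 ∈ S ∧ e.2 = v))
  obtain rfl | hPne := P.eq_empty_or_nonempty
  · simp
  have huP : u ∉ P := fun h => (mem_erase.1 (hP h)).1 rfl
  have hPA : P ⊆ S ∪ T := hP.trans (erase_subset _ _)
  have hPA' : P ⊂ S ∪ T := ⟨hPA, fun h => huP (h (mem_union_left _ (mem_sdiff.1 hu).1))⟩
  have hlossP : ∀ Q ⊆ P, nbhd E Q ⊆ insert v (nbhd E' Q) := fun Q hQ =>
    nbhd_subset_insert_nbhd_filter fun p hp _ hw _ =>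
      ⟨ne_of_mem_of_not_mem (hQ hp) huP, fun h => hw h.2⟩
  have hkeepT : nbhd E' (P ∩ (T \ S)) = nbhd E (P ∩ (T \ S)) :=
    nbhd_filter_of_forall fun p hp _ _ =>
      ⟨ne_of_mem_of_not_mem (mem_inter.1 hp).1 huP,
        fun h => (mem_sdiff.1 (mem_inter.1 hp).2).2 h.1⟩
  have hsum := card_add_card_inter_le_of_subset_insert (hlossP P subset_rfl)
    (hlossP (P ∩ (S \ T)) inter_subset_left)
    (hkeepT.symm.subset.trans (nbhd_mono inter_subset_left))
  have := hstrict P hPA hPne hPA'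
  rw [hkeepT]
  omega

/-- Choosing an edge `(u,v)` with `u ∈ S \ T` preserves the simultaneous Hall condition
when the strict simultaneous Hall condition holds on all nonempty proper subsets. -/
theorem simHall_strict_edge_choice (B : Finset W) (S T : Finset V) (E : Finset (V × W))
    (hE : E ⊆ (S ∪ T) ×ˢ B) (hST : (S ∩ T).Nonempty)
    (u : V) (v : W) (hu : u ∈ S \ T) (huv : (u, v) ∈ E)
    (hstrict : ∀ P ⊆ S ∪ T, P.Nonempty → P ⊂ S ∪ T →
      P.card < (nbhd E P).card +
        (nbhd E (P ∩ (S \ T)) ∩ nbhd E (P ∩ (T \ S))).card) :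
    ∀ P ⊆ (S ∪ T).erase u,
      P.card ≤ (nbhd (E.filter (fun e => e.1 ≠ u ∧ ¬(e.1 ∈ S ∧ e.2 = v))) P).card +
        (nbhd (E.filter (fun e => e.1 ≠ u ∧ ¬(e.1 ∈ S ∧ e.2 = v))) (P ∩ (S \ T)) ∩
         nbhd (E.filter (fun e => e.1 ≠ u ∧ ¬(e.1 ∈ S ∧ e.2 = v))) (P ∩ (T \ S))).card :=
  simHall_strict_edge_choice_general S T E u v hu hstrict
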